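/- For any set S of n ≥ 3 points in general position in the plane, Σ_{k=3}^{n} Σ_{ℓ=0}^{n−3} 2^ℓ · X_{k,ℓ}(S) = 2^n − n²/2 − n/2 − 1. -/

import Mathlib

/-!
Sort the subsets `A ⊆ S` with `|A| ≥ 3` by the vertex set `T` of their convex hull. As no three
points of `S` are collinear, `T` has at least three points and every other point `p` of `A` lies
in the interior of the hull: otherwise a supporting line through `p` would contain points of `A`
whose hull contains `p`, hence at least two besides `p`. Conversely, adding to a convex polygon
`T` any set of points of `S` inside it leaves its vertex set unchanged. So a convex polygon with
`ℓ` interior points is the vertex set of exactly `2 ^ ℓ` subsets, and the weighted sum counts the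
`2 ^ n - 1 - n - n(n-1)/2` subsets of `S` with at least three points.
-/

open Finset
open scoped Classical

def GenPos (S : Finset (ℝ × ℝ)) : Prop :=
  ∀ T ⊆ S, T.card = 3 → ¬ Collinear ℝ (T : Set (ℝ × ℝ))

def ConvexPos (T : Finset (ℝ × ℝ)) : Prop :=
  ∀ p ∈ T, p ∉ convexHull ℝ ((T : Set (ℝ × ℝ)) \ {p})

/-- number of convex k-gons with vertices in S and exactly l points of S inside -/
noncomputable def X (S : Finset (ℝ × ℝ)) (k l : ℕ) : ℕ :=
  ((Finset.powersetCard k S).filter (fun T => ConvexPos T ∧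
    (S.filter (fun p => p ∈ interior (convexHull ℝ (T : Set (ℝ × ℝ))))).card = l)).card

/-- number of extreme points (convex hull vertices) of S -/
noncomputable def hullVerts (S : Finset (ℝ × ℝ)) : ℕ :=
  (S.filter (fun p => p ∉ convexHull ℝ ((S : Set (ℝ × ℝ)) \ {p}))).card

open Module

section Module

variable {E : Type*} [AddCommGroup E] [Module ℝ E]

theorem Finset.mem_convexHull_filter_eq_of_forall_le {F : Type*} [FunLike F E ℝ]
    [LinearMapClass F ℝ E ℝ] {A : Finset E} {f : F} {c : ℝ} {p : E} (hle : ∀ x ∈ A, f x ≤ c)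
    (hp : p ∈ convexHull ℝ (A : Set E)) (hpc : f p = c) :
    p ∈ convexHull ℝ (A.filter (f · = c) : Set E) := by
  obtain ⟨w, hw₀, hw₁, rfl⟩ := Finset.mem_convexHull'.1 hp
  have hslack : ∑ y ∈ A, w y * (c - f y) = 0 := by
    simp only [mul_sub, sum_sub_distrib, ← sum_mul, hw₁, one_mul, ← hpc, map_sum, map_smul,
      smul_eq_mul, sub_self]
  have hface : ∀ y ∈ A, w y ≠ 0 → f y = c := fun y hy hwy => by
    have := (sum_eq_zero_iff_of_nonneg fun z hz => mul_nonneg (hw₀ z hz)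
      (sub_nonneg.2 (hle z hz))).1 hslack y hy
    linarith [(mul_eq_zero.1 this).resolve_left hwy]
  refine Finset.mem_convexHull'.2 ⟨w, fun y hy => hw₀ y (mem_filter.1 hy).1, ?_, ?_⟩
  · rwa [sum_filter_of_ne hface]
  · exact sum_filter_of_ne fun y hy hwy => hface y hy (left_ne_zero_of_smul hwy)

theorem Finset.not_collinear_of_forall_card_eq_three {A : Finset E}
    (hA : ∀ T ⊆ A, #T = 3 → ¬ Collinear ℝ (T : Set E)) (h3 : 3 ≤ #A) :
    ¬ Collinear ℝ (A : Set E) := fun hcol => by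
  obtain ⟨T, hTA, hT⟩ := exists_subset_card_eq h3
  exact hA T hTA hT (hcol.subset (coe_subset.2 hTA))

theorem collinear_setOf_apply_eq [FiniteDimensional ℝ E] (hE : finrank ℝ E = 2) {f : E →ₗ[ℝ] ℝ}
    (hf : f ≠ 0) (c : ℝ) :
    Collinear ℝ {x | f x = c} := by
  have hspan : vectorSpan ℝ {x | f x = c} ≤ LinearMap.ker f := by
    rw [vectorSpan_def, Submodule.span_le]
    rintro _ ⟨x, hx, y, hy, rfl⟩
    simp_all
  rw [collinear_iff_finrank_le_one]
  have := Module.Dual.finrank_ker_add_one_of_ne_zero hf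
  have := Submodule.finrank_mono hspan
  omega

end Module

section ConvexHull

variable {E : Type*} [NormedAddCommGroup E] [NormedSpace ℝ E]

theorem Finset.mem_extremePoints_convexHull_iff {A : Finset E} {x : E} :
    x ∈ (convexHull ℝ (A : Set E)).extremePoints ℝ ↔
      x ∈ A ∧ x ∉ convexHull ℝ ((A : Set E) \ {x}) := by
  refine ⟨fun hx => ⟨extremePoints_convexHull_subset hx, fun hmem => ?_⟩, fun ⟨hxA, hx⟩ => ?_⟩
  · rw [(convex_convexHull ℝ _).mem_extremePoints_iff_mem_sdiff_convexHull_sdiff] at hx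
    exact hx.2 (convexHull_mono (Set.sdiff_subset_sdiff_left (subset_convexHull ℝ _)) hmem)
  -- A functional separating `x` from the other points exposes `x`.
  obtain ⟨l, u, hlu, hux⟩ := geometric_hahn_banach_closed_point (convex_convexHull ℝ _)
    (A.finite_toSet.sdiff.isClosed_convexHull ℝ) hx
  have hlt : ∀ y ∈ A, y ≠ x → l y < l x := fun y hy hyx =>
    (hlu y (subset_convexHull ℝ _ ⟨hy, hyx⟩)).trans hux
  have hle : ∀ y ∈ convexHull ℝ (A : Set E), l y ≤ l x :=
    convexHull_min (fun y hy => (eq_or_ne y x).elim (fun h => (congrArg l h).le)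
      fun h => (hlt y hy h).le) (convex_halfSpace_le (l : E →ₗ[ℝ] ℝ).isLinear _)
  have hface : A.filter (l · = l x) = {x} := by
    ext y
    simp only [mem_filter, mem_singleton]
    exact ⟨fun ⟨hy, hyx⟩ => by_contra fun h => (hlt y hy h).ne hyx, by rintro rfl; exact ⟨hxA, rfl⟩⟩
  refine exposedPoints_subset_extremePoints ⟨subset_convexHull ℝ _ hxA, l, fun y hy =>
    ⟨hle y hy, fun hxy => ?_⟩⟩
  simpa [hface] using mem_convexHull_filter_eq_of_forall_le
    (fun z hz => hle z (subset_convexHull ℝ _ hz)) hy (le_antisymm (hle y hy) hxy)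

noncomputable def Finset.hullVertices (A : Finset E) : Finset E :=
  A.filter (· ∈ (convexHull ℝ (A : Set E)).extremePoints ℝ)

noncomputable def Finset.interiorPoints (S T : Finset E) : Finset E :=
  S.filter (· ∈ interior (convexHull ℝ (T : Set E)))

namespace Finset

theorem hullVertices_subset (A : Finset E) : A.hullVertices ⊆ A := filter_subset _ _

theorem coe_hullVertices (A : Finset E) :
    (A.hullVertices : Set E) = (convexHull ℝ (A : Set E)).extremePoints ℝ := by
  ext x
  simp only [hullVertices, coe_filter, Set.mem_ofPred_eq, and_iff_right_iff_imp]
  exact fun hx => extremePoints_convexHull_subset hx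

theorem convexHull_hullVertices (A : Finset E) :
    convexHull ℝ (A.hullVertices : Set E) = convexHull ℝ (A : Set E) := by
  rw [← (A.hullVertices.finite_toSet.isClosed_convexHull ℝ).closure_eq, coe_hullVertices,
    closure_convexHull_extremePoints (A.finite_toSet.isCompact_convexHull ℝ)
      (convex_convexHull ℝ _)]

theorem hullVertices_hullVertices (A : Finset E) :
    A.hullVertices.hullVertices = A.hullVertices := by
  rw [hullVertices, convexHull_hullVertices, filter_eq_self]
  exact fun x hx => (mem_filter.1 hx).2

theorem hullVertices_eq_self_iff {T : Finset E} :
    T.hullVertices = T ↔ ∀ t ∈ T, t ∉ convexHull ℝ ((T : Set E) \ {t}) := by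
  simp only [hullVertices, filter_eq_self, mem_extremePoints_convexHull_iff]
  exact forall₂_congr fun t ht => and_iff_right ht

theorem finrank_add_one_le_card_of_interior_convexHull_nonempty [FiniteDimensional ℝ E]
    {s : Finset E} (h : (interior (convexHull ℝ (s : Set E))).Nonempty) :
    finrank ℝ E + 1 ≤ #s := by
  have hspan := interior_convexHull_nonempty_iff_affineSpan_eq_top.1 h
  have hne : s.Nonempty :=
    coe_nonempty.1 (AffineSubspace.nonempty_of_affineSpan_eq_top ℝ E E hspan)
  have := finrank_vectorSpan_image_finset_le ℝ id s (n := #s - 1) (by have := hne.card_pos; omega)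
  rw [image_id, AffineSubspace.vectorSpan_eq_top_of_affineSpan_eq_top ℝ E E hspan,
    finrank_top] at this
  have := hne.card_pos
  omega

variable [Nontrivial E]

theorem notMem_interior_convexHull_of_hullVertices_eq {T : Finset E} (hT : T.hullVertices = T)
    {t : E} (ht : t ∈ T) : t ∉ interior (convexHull ℝ (T : Set E)) := by
  rw [← hT] at ht
  exact Set.disjoint_right.1 (disjoint_interior_extremePoints _) (mem_filter.1 ht).2

theorem disjoint_interiorPoints {S T : Finset E} (hT : T.hullVertices = T) :
    Disjoint T (S.interiorPoints T) :=
  disjoint_right.2 fun _ hp ht =>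
    notMem_interior_convexHull_of_hullVertices_eq hT ht (mem_filter.1 hp).2

theorem hullVertices_union_of_subset_interior [DecidableEq E] {T B : Finset E}
    (hT : T.hullVertices = T)
    (hB : (B : Set E) ⊆ interior (convexHull ℝ (T : Set E))) : (T ∪ B).hullVertices = T := by
  have hconv : convexHull ℝ ((T ∪ B : Finset E) : Set E) = convexHull ℝ (T : Set E) := by
    refine (convexHull_min ?_ (convex_convexHull ℝ _)).antisymm (convexHull_mono (by simp))
    rw [coe_union]
    exact Set.union_subset (subset_convexHull ℝ _) (hB.trans interior_subset)
  ext x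
  simp only [hullVertices, hconv, mem_filter, mem_union]
  constructor
  · rintro ⟨hx | hx, hext⟩
    · exact hx
    · exact absurd hext (Set.disjoint_left.1 (disjoint_interior_extremePoints _) (hB hx))
  · intro hx
    rw [← hT] at hx
    exact ⟨Or.inl (mem_filter.1 hx).1, (mem_filter.1 hx).2⟩

end Finset

end ConvexHull

section Plane

variable {E : Type*} [NormedAddCommGroup E] [NormedSpace ℝ E] [FiniteDimensional ℝ E]

theorem interior_convexHull_nonempty_of_not_collinear (hE : finrank ℝ E = 2) {s : Set E}
    (hs : ¬ Collinear ℝ s) : (interior (convexHull ℝ s)).Nonempty := by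
  have hne : s.Nonempty := Set.nonempty_iff_ne_empty.2 fun h => hs (h ▸ collinear_empty ℝ E)
  rw [interior_convexHull_nonempty_iff_affineSpan_eq_top,
    AffineSubspace.affineSpan_eq_top_iff_vectorSpan_eq_top_of_nonempty ℝ E E hne]
  rw [collinear_iff_finrank_le_one, not_le] at hs
  exact Submodule.eq_top_of_finrank_eq (le_antisymm (Submodule.finrank_le _) (by omega))

namespace Finset

variable (hE : finrank ℝ E = 2)
include hE

theorem mem_interior_convexHull_of_notMem_extremePoints {A : Finset E}
    (hA : ∀ T ⊆ A, #T = 3 → ¬ Collinear ℝ (T : Set E)) (h3 : 3 ≤ #A) {p : E} (hpA : p ∈ A)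
    (hp : p ∉ (convexHull ℝ (A : Set E)).extremePoints ℝ) :
    p ∈ interior (convexHull ℝ (A : Set E)) := by
  have hpconv : p ∈ convexHull ℝ ((A.erase p : Finset E) : Set E) := by
    rw [mem_extremePoints_convexHull_iff, not_and_not_right] at hp
    rw [coe_erase]
    exact hp hpA
  by_contra hint
  obtain ⟨f, hf0, hf⟩ := geometric_hahn_banach_of_nonempty_interior_point (convex_convexHull ℝ _)
    hint (interior_convexHull_nonempty_of_not_collinear hE
      (not_collinear_of_forall_card_eq_three hA h3))
  have hface := mem_convexHull_filter_eq_of_forall_le (f := f)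
    (fun x hx => hf x (subset_convexHull ℝ _ (mem_of_mem_erase hx))) hpconv rfl
  have hsub : ((A.erase p).filter (f · = f p) : Set E).Subsingleton := by
    intro a ha b hb
    by_contra hab
    simp only [coe_filter, mem_erase] at ha hb
    refine hA {p, a, b} ?_ (card_eq_three.2 ⟨p, a, b, Ne.symm ha.1.1, Ne.symm hb.1.1, hab, rfl⟩) ?_
    · simp [insert_subset_iff, hpA, ha.1.2, hb.1.2]
    · refine (collinear_setOf_apply_eq hE (f := (f : E →ₗ[ℝ] ℝ)) ?_ (f p)).subset ?_
      · exact fun h => hf0 (ContinuousLinearMap.coe_injective h)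
      · simp [Set.insert_subset_iff, ha.2, hb.2]
  have hhull : convexHull ℝ ((A.erase p).filter (f · = f p) : Set E) =
      ((A.erase p).filter (f · = f p) : Set E) := by
    obtain hF | ⟨a, hF⟩ := hsub.eq_empty_or_singleton <;>
      simp only [hF, convexHull_empty, convexHull_singleton]
  rw [hhull] at hface
  simp at hface

theorem three_le_card_hullVertices {A : Finset E}
    (hA : ∀ T ⊆ A, #T = 3 → ¬ Collinear ℝ (T : Set E)) (h3 : 3 ≤ #A) : 3 ≤ #A.hullVertices := by
  have := finrank_add_one_le_card_of_interior_convexHull_nonempty (s := A.hullVertices)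
  rw [convexHull_hullVertices] at this
  have := this (interior_convexHull_nonempty_of_not_collinear hE
    (not_collinear_of_forall_card_eq_three hA h3))
  omega

theorem card_filter_hullVertices_eq [DecidableEq E] {S T : Finset E}
    (hS : ∀ U ⊆ S, #U = 3 → ¬ Collinear ℝ (U : Set E)) (hTS : T ⊆ S) (hT3 : 3 ≤ #T)
    (hT : T.hullVertices = T) :
    #((S.powerset.filter (3 ≤ #·)).filter (·.hullVertices = T)) = 2 ^ #(S.interiorPoints T) := by
  have : Nontrivial E := Module.nontrivial_of_finrank_eq_succ hE
  have hinj : Set.InjOn (T ∪ ·) ((S.interiorPoints T).powerset : Set (Finset E)) :=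
    fun B hB B' hB' h => by
      have hd := disjoint_interiorPoints (S := S) hT
      rw [← union_sdiff_cancel_left (hd.mono_right (mem_powerset.1 hB)),
        ← union_sdiff_cancel_left (hd.mono_right (mem_powerset.1 hB')),
        show T ∪ B = T ∪ B' from h]
  rw [← card_powerset, ← card_image_of_injOn hinj]
  congr 1
  ext A
  simp only [mem_filter, mem_powerset, mem_image]
  constructor
  · rintro ⟨⟨hAS, hA3⟩, rfl⟩
    refine ⟨A \ A.hullVertices, fun p hp => ?_, union_sdiff_of_subset (hullVertices_subset A)⟩
    obtain ⟨hpA, hpV⟩ := mem_sdiff.1 hp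
    refine mem_filter.2 ⟨hAS hpA, ?_⟩
    rw [convexHull_hullVertices]
    exact mem_interior_convexHull_of_notMem_extremePoints hE (fun U hU => hS U (hU.trans hAS))
      hA3 hpA fun h => hpV (mem_filter.2 ⟨hpA, h⟩)
  · rintro ⟨B, hB, rfl⟩
    refine ⟨⟨union_subset hTS (hB.trans (filter_subset _ _)),
      hT3.trans (card_le_card subset_union_left)⟩, hullVertices_union_of_subset_interior hT ?_⟩
    exact fun p hp => (mem_filter.1 (hB hp)).2

theorem card_powerset_filter_three_le_eq_sum [DecidableEq E] {S : Finset E}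
    (hS : ∀ U ⊆ S, #U = 3 → ¬ Collinear ℝ (U : Set E)) :
    #(S.powerset.filter (3 ≤ #·)) =
      ∑ T ∈ S.powerset.filter (fun T => 3 ≤ #T ∧ T.hullVertices = T),
        2 ^ #(S.interiorPoints T) := by
  rw [card_eq_sum_card_fiberwise (f := hullVertices) fun A hA => ?_]
  · refine sum_congr rfl fun T hT => ?_
    simp only [mem_filter, mem_powerset] at hT
    exact card_filter_hullVertices_eq hE hS hT.1 hT.2.1 hT.2.2
  simp only [coe_filter, mem_powerset, Set.mem_ofPred_eq] at hA ⊢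
  exact ⟨(hullVertices_subset A).trans hA.1,
    three_le_card_hullVertices hE (fun U hU => hS U (hU.trans hA.1)) hA.2,
    hullVertices_hullVertices A⟩

end Finset

end Plane

theorem Finset.card_powerset_filter_three_le_add {α : Type*} (S : Finset α) :
    #(S.powerset.filter (3 ≤ #·)) + (1 + #S + (#S).choose 2) = 2 ^ #S := by
  have hsmall : S.powerset.filter (¬ 3 ≤ #·) =
      (powersetCard 0 S ∪ powersetCard 1 S) ∪ powersetCard 2 S := by
    ext A
    by_cases hA : A ⊆ S <;> simp only [mem_filter, mem_powerset, mem_union, mem_powersetCard, hA,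
      true_and, false_and, or_self]
    omega
  have hdisj {i j : ℕ} (hij : i ≠ j) : Disjoint (powersetCard i S) (powersetCard j S) :=
    disjoint_left.2 fun A hi hj =>
      hij ((mem_powersetCard.1 hi).2.symm.trans (mem_powersetCard.1 hj).2)
  rw [← card_powerset S, ← card_filter_add_card_filter_not (s := S.powerset) (3 ≤ #·), hsmall,
    card_union_of_disjoint (disjoint_union_left.2 ⟨hdisj (by decide), hdisj (by decide)⟩),
    card_union_of_disjoint (hdisj (by decide))]
  simp [card_powersetCard]

theorem convexPos_iff_hullVertices_eq {T : Finset (ℝ × ℝ)} : ConvexPos T ↔ T.hullVertices = T :=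
  hullVertices_eq_self_iff.symm

theorem sum_sum_two_pow_mul_X (S : Finset (ℝ × ℝ)) :
    ∑ k ∈ Icc 3 #S, ∑ l ∈ range (#S - 2), 2 ^ l * X S k l =
      ∑ T ∈ S.powerset.filter (fun T => 3 ≤ #T ∧ T.hullVertices = T),
        2 ^ #(S.interiorPoints T) := by
  rw [← sum_product', ← sum_fiberwise_of_maps_to (g := fun T => (#T, #(S.interiorPoints T)))
    (t := Icc 3 #S ×ˢ range (#S - 2))]
  · refine sum_congr rfl fun ⟨k, l⟩ hkl => ?_
    have hk : 3 ≤ k := (mem_Icc.1 (mem_product.1 hkl).1).1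
    rw [sum_const_nat (m := 2 ^ l) fun T hT => by
      simp only [mem_filter, Prod.mk.injEq] at hT; rw [hT.2.2], mul_comm, X]
    congr 2
    ext T
    simp only [mem_filter, mem_powerset, mem_powersetCard, Prod.ext_iff,
      convexPos_iff_hullVertices_eq, interiorPoints]
    constructor
    · rintro ⟨⟨hTS, hTk⟩, hT, hl⟩
      exact ⟨⟨hTS, hTk ▸ hk, hT⟩, hTk, hl⟩
    · rintro ⟨⟨hTS, -, hT⟩, hTk, hl⟩
      exact ⟨⟨hTS, hTk⟩, hT, hl⟩
  · intro T hT
    simp only [mem_filter, mem_powerset] at hT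
    have hIT : S.interiorPoints T ⊆ S \ T :=
      subset_sdiff.2 ⟨filter_subset _ _, (disjoint_interiorPoints hT.2.2).symm⟩
    have := card_le_card hIT
    rw [card_sdiff_of_subset hT.1] at this
    simp only [mem_product, mem_Icc, mem_range]
    have := card_le_card hT.1
    omega

theorem stmt6_general (S : Finset (ℝ × ℝ)) (hgp : GenPos S) :
    ∑ k ∈ Finset.Icc 3 S.card, ∑ l ∈ Finset.range (S.card - 2),
      (2 : ℝ) ^ l * X S k l =
    2 ^ S.card - (S.card : ℝ) ^ 2 / 2 - (S.card : ℝ) / 2 - 1 := by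
  have hcount : ∑ k ∈ Icc 3 #S, ∑ l ∈ range (#S - 2), 2 ^ l * X S k l + (1 + #S + (#S).choose 2)
      = 2 ^ #S := by
    rw [sum_sum_two_pow_mul_X, ← card_powerset_filter_three_le_eq_sum (by simp) hgp]
    exact card_powerset_filter_three_le_add S
  have := congrArg (Nat.cast (R := ℝ)) hcount
  push_cast [Nat.cast_choose_two] at this
  linear_combination this

theorem stmt6 (S : Finset (ℝ × ℝ)) (hgp : GenPos S) (hn : 3 ≤ S.card) :
    ∑ k ∈ Finset.Icc 3 S.card, ∑ l ∈ Finset.range (S.card - 2),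
      (2 : ℝ) ^ l * X S k l =
    2 ^ S.card - (S.card : ℝ) ^ 2 / 2 - (S.card : ℝ) / 2 - 1 :=
  stmt6_general S hgp
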